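/- arXiv:2209.12301 — 2 statements merged into one kernel-verified Lean document; each statement's English description precedes it below -/
import Mathlib

section
/- Let D be a Shift-ECS and let v3, v4 be shift nodes with labels k1, k2 such that u3 = ℓ(v3) and u4 = ℓ(v4) are union nodes whose right children r(u3), r(u4) are shift nodes with labels k1', k2'. Extend D with fresh nodes v', v1', v2', v3', v4', v5', v6' where: λ(v') = k1, ℓ(v') = v1'; λ(v1') = ∪, ℓ(v1') = ℓ(u3), r(v1') = v2'; λ(v2') = k2 − k1, ℓ(v2') = v3'; λ(v3') = ∪, ℓ(v3') = ℓ(u4), r(v3') = v4'; λ(v4') = k1 + k1' − k2, ℓ(v4') = v5'; λ(v5') = ∪, ℓ(v5') = ℓ(r(u3)), r(v5') = v6'; λ(v6') = k2 + k2' − k1 − k1', ℓ(v6') = ℓ(r(u4)). Then ⟦D'⟧(v') = ⟦D⟧(v3) ∪ ⟦D⟧(v4) in the extended structure D'. -/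
/-- Shift a string over `Ω × ℤ` by `k`: add `k` to every position. -/
def sh {Ω : Type} (w : List (Ω × ℤ)) (k : ℤ) : List (Ω × ℤ) :=
  w.map (fun p => (p.1, p.2 + k))

def shL {Ω : Type} (L : Set (List (Ω × ℤ))) (k : ℤ) : Set (List (Ω × ℤ)) :=
  (fun w => sh w k) '' L

def catL {Ω : Type} (L1 L2 : Set (List (Ω × ℤ))) : Set (List (Ω × ℤ)) :=
  Set.image2 (· ++ ·) L1 L2

/-- Labels of a Shift-ECS node: an output letter, a shift value, union, or product. -/
inductive Lab (Ω : Type) where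
  | bot (o : Ω)
  | shift (k : ℤ)
  | union
  | prod

/-- A Shift-ECS: nodes with partial left/right children and a labeling. -/
structure ECS (Ω : Type) where
  V : Type
  l : V → Option V
  r : V → Option V
  lab : V → Lab Ω

/-- The semantics `⟦D⟧(v)` of a Shift-ECS, as an inductively defined
membership relation: singletons at bottom nodes, union at `∪`-nodes,
concatenation at `⊙`-nodes, and shifting at shift nodes. -/
inductive ECS.Sem {Ω : Type} (D : ECS Ω) : D.V → List (Ω × ℤ) → Prop
  | bot {v o} : D.lab v = .bot o → D.Sem v [(o, 1)]
  | unionL {v u w} : D.lab v = .union → D.l v = some u → D.Sem u w → D.Sem v w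
  | unionR {v u w} : D.lab v = .union → D.r v = some u → D.Sem u w → D.Sem v w
  | prod {v u1 u2 w1 w2} : D.lab v = .prod → D.l v = some u1 → D.r v = some u2 →
      D.Sem u1 w1 → D.Sem u2 w2 → D.Sem v (w1 ++ w2)
  | shift {v u k w} : D.lab v = .shift k → D.l v = some u → D.Sem u w → D.Sem v (sh w k)

/-- `⟦D⟧(v)` as a set. -/
def ECS.semSet {Ω : Type} (D : ECS Ω) (v : D.V) : Set (List (Ω × ℤ)) :=
  {w | D.Sem v w}

def ECS.optSet {Ω : Type} (D : ECS Ω) : Option D.V → Set (List (Ω × ℤ))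
  | none => ∅
  | some u => D.semSet u

lemma sh_sh {Ω : Type} (w : List (Ω × ℤ)) (a b : ℤ) : sh (sh w a) b = sh w (a + b) := by
  simp [sh, List.map_map, add_assoc]

lemma shL_shL {Ω : Type} (L : Set (List (Ω × ℤ))) (a b : ℤ) :
    shL (shL L a) b = shL L (a + b) := by
  simp [shL, Set.image_image, sh_sh]

lemma shL_union {Ω : Type} (L M : Set (List (Ω × ℤ))) (k : ℤ) :
    shL (L ∪ M) k = shL L k ∪ shL M k := Set.image_union _ _ _

lemma ECS.semSet_shift {Ω : Type} (D : ECS Ω) {v u : D.V} {k : ℤ}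
    (hlab : D.lab v = .shift k) (hl : D.l v = some u) :
    D.semSet v = shL (D.semSet u) k := by
  ext w
  constructor
  · intro h
    cases h with
    | bot h => rw [hlab] at h; cases h
    | unionL h => rw [hlab] at h; cases h
    | unionR h => rw [hlab] at h; cases h
    | prod h => rw [hlab] at h; cases h
    | shift h hl' hs =>
      rw [hlab] at h; cases h
      rw [hl] at hl'; cases hl'
      exact ⟨_, hs, rfl⟩
  · rintro ⟨x, hx, rfl⟩
    exact ECS.Sem.shift hlab hl hx

lemma ECS.semSet_union {Ω : Type} (D : ECS Ω) {v : D.V}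
    (hlab : D.lab v = .union) :
    D.semSet v = D.optSet (D.l v) ∪ D.optSet (D.r v) := by
  ext w
  constructor
  · intro h
    cases h with
    | bot h => rw [hlab] at h; cases h
    | prod h => rw [hlab] at h; cases h
    | shift h => rw [hlab] at h; cases h
    | unionL h hl hs => left; rw [hl]; exact hs
    | unionR h hr hs => right; rw [hr]; exact hs
  · rintro (h | h)
    · rcases hu : D.l v with _ | u
      · rw [hu] at h; cases h
      · rw [hu] at h; exact ECS.Sem.unionL hlab hu h
    · rcases hu : D.r v with _ | u
      · rw [hu] at h; cases h
      · rw [hu] at h; exact ECS.Sem.unionR hlab hu h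

lemma ECS.semSet_shift' {Ω : Type} (D : ECS Ω) {v : D.V} {k : ℤ}
    (hlab : D.lab v = .shift k) :
    D.semSet v = shL (D.optSet (D.l v)) k := by
  rcases hu : D.l v with _ | u
  · ext w
    simp only [ECS.optSet, shL, Set.image_empty, Set.mem_empty_iff_false, iff_false]
    intro h
    cases h with
    | bot h => rw [hlab] at h; cases h
    | unionL h => rw [hlab] at h; cases h
    | unionR h => rw [hlab] at h; cases h
    | prod h => rw [hlab] at h; cases h
    | shift h hl' hs => rw [hu] at hl'; cases hl'
  · exact D.semSet_shift hlab hu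

/-- Correctness of the union gadget: `v3`, `v4` are shift nodes with labels
`k1`, `k2` whose left children `u3`, `u4` are union nodes whose right children
are shift nodes with labels `k1'`, `k2'`. Fresh nodes `v'`, `v1'`, ..., `v6'`
are added as described; then `⟦D'⟧(v') = ⟦D⟧(v3) ∪ ⟦D⟧(v4)` in the extended
structure (old-node semantics being preserved by extension). -/
theorem union_gadget_correct {Ω : Type} (D : ECS Ω)
    (v3 v4 u3 u4 w3 w4 v' v1' v2' v3' v4' v5' v6' : D.V)
    (k1 k2 k1' k2' : ℤ)
    (hv3 : D.lab v3 = .shift k1) (hv3l : D.l v3 = some u3)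
    (hv4 : D.lab v4 = .shift k2) (hv4l : D.l v4 = some u4)
    (hu3 : D.lab u3 = .union) (hu3r : D.r u3 = some w3)
    (hu4 : D.lab u4 = .union) (hu4r : D.r u4 = some w4)
    (hw3 : D.lab w3 = .shift k1') (hw4 : D.lab w4 = .shift k2')
    (hv' : D.lab v' = .shift k1) (hv'l : D.l v' = some v1')
    (hv1 : D.lab v1' = .union) (hv1l : D.l v1' = D.l u3) (hv1r : D.r v1' = some v2')
    (hv2 : D.lab v2' = .shift (k2 - k1)) (hv2l : D.l v2' = some v3')
    (hv3' : D.lab v3' = .union) (hv3'l : D.l v3' = D.l u4) (hv3'r : D.r v3' = some v4')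
    (hv4' : D.lab v4' = .shift (k1 + k1' - k2)) (hv4'l : D.l v4' = some v5')
    (hv5 : D.lab v5' = .union) (hv5l : D.l v5' = D.l w3) (hv5r : D.r v5' = some v6')
    (hv6 : D.lab v6' = .shift (k2 + k2' - k1 - k1')) (hv6l : D.l v6' = D.l w4) :
    D.semSet v' = D.semSet v3 ∪ D.semSet v4 := by
  have e6 : D.semSet v6' = shL (D.optSet (D.l w4)) (k2 + k2' - k1 - k1') := by
    rw [D.semSet_shift' hv6, hv6l]
  have e5 : D.semSet v5' = D.optSet (D.l w3) ∪ D.semSet v6' := by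
    rw [D.semSet_union hv5, hv5l, hv5r]; rfl
  have e4 : D.semSet v4' = shL (D.semSet v5') (k1 + k1' - k2) :=
    D.semSet_shift hv4' hv4'l
  have e3 : D.semSet v3' = D.optSet (D.l u4) ∪ D.semSet v4' := by
    rw [D.semSet_union hv3', hv3'l, hv3'r]; rfl
  have e2 : D.semSet v2' = shL (D.semSet v3') (k2 - k1) :=
    D.semSet_shift hv2 hv2l
  have e1 : D.semSet v1' = D.optSet (D.l u3) ∪ D.semSet v2' := by
    rw [D.semSet_union hv1, hv1l, hv1r]; rfl
  have e0 : D.semSet v' = shL (D.semSet v1') k1 := D.semSet_shift hv' hv'l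
  have fw3 : D.semSet w3 = shL (D.optSet (D.l w3)) k1' := D.semSet_shift' hw3
  have fw4 : D.semSet w4 = shL (D.optSet (D.l w4)) k2' := D.semSet_shift' hw4
  have f3 : D.semSet v3 =
      shL (D.optSet (D.l u3)) k1 ∪ shL (D.optSet (D.l w3)) (k1' + k1) := by
    rw [D.semSet_shift hv3 hv3l, D.semSet_union hu3, hu3r,
      show D.optSet (some w3) = D.semSet w3 from rfl, fw3,
      shL_union, shL_shL]
  have f4 : D.semSet v4 =
      shL (D.optSet (D.l u4)) k2 ∪ shL (D.optSet (D.l w4)) (k2' + k2) := by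
    rw [D.semSet_shift hv4 hv4l, D.semSet_union hu4, hu4r,
      show D.optSet (some w4) = D.semSet w4 from rfl, fw4,
      shL_union, shL_shL]
  rw [e0, e1, e2, e3, e4, e5, e6, f3, f4]
  rw [shL_union, shL_union, shL_union, shL_union, shL_union, shL_union,
    shL_shL, shL_shL, shL_shL, shL_shL, shL_shL, shL_shL]
  ring_nf
  ext w
  simp only [Set.mem_union]
  tauto
end

section
/- With the matrix notation of the SLP evaluation: if an annotated automaton A is unambiguous (each annotation in ⟦A⟧(d) arises from exactly one accepting run), then for every rule X → Y1 Y2 and every pair of states (p, q), the union over q' ∈ Q in M_X[p,q] = ⋃_{q'} M_{Y1}[p,q'] · sh(M_{Y2}[q',q], |doc(Y1)|) is a disjoint union (over distinct intermediate states q', for annotations arising in accepting contexts), and each concatenation decomposes uniquely. -/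
/-! Positions in an annotation of `M_{Y1}[p,q']` are at most `|doc(Y1)|`, while those in the
shifted `M_{Y2}[q',q]` exceed it, so a concatenation determines both factors (filter by
position). If a word lay in the products through `q1` and through `q2`, it would be the
annotation of two partial runs from `p` to `q` over `doc(Y1) · doc(Y2)`, sitting in `q1` resp.
`q2` after `|doc(Y1)|` letters. By trimness both extend, by the same prefix and suffix, to
accepting runs with equal annotations; unambiguity makes them equal, so `q1 = q2`. -/

/-- An annotated automaton (AnnA) over input alphabet `A` and output alphabet
`Ω`: plain letter transitions `Δp`, annotated letter transitions `Δa`, an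
initial state and final states. -/
structure AnnA (Q A Ω : Type) where
  Δp : Q → A → Q → Prop
  Δa : Q → A → Ω → Q → Prop
  q0 : Q
  F : Set Q

/-- A run of an AnnA from state `p` over a document, recorded as a trace:
for each letter, the (optional) annotation used and the state reached. -/
inductive AnnA.Run {Q A Ω : Type} (M : AnnA Q A Ω) :
    Q → List A → List (Option Ω × Q) → Prop
  | nil {p} : M.Run p [] []
  | plain {p a q d tr} : M.Δp p a q → M.Run q d tr → M.Run p (a :: d) ((none, q) :: tr)
  | ann {p a o q d tr} : M.Δa p a o q → M.Run q d tr →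
      M.Run p (a :: d) ((some o, q) :: tr)

/-- The annotation of a trace starting after position `i`: the sequence of
pairs `(o, j)` for the positions `j` read with annotation `o` (1-indexed). -/
def annOf {Q Ω : Type} : ℕ → List (Option Ω × Q) → List (Ω × ℕ)
  | _, [] => []
  | i, (none, _) :: tr => annOf (i + 1) tr
  | i, (some o, _) :: tr => (o, i + 1) :: annOf (i + 1) tr

/-- The final state of a run starting at `p` with trace `tr`. -/
def finalState {Q Ω : Type} (p : Q) (tr : List (Option Ω × Q)) : Q :=
  (tr.map Prod.snd).getLastD p

/-- The semantics `⟦M⟧(d)`: the set of annotations of accepting runs over `d`. -/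
def AnnA.sem {Q A Ω : Type} (M : AnnA Q A Ω) (d : List A) : Set (List (Ω × ℕ)) :=
  {ν | ∃ tr, M.Run M.q0 d tr ∧ finalState M.q0 tr ∈ M.F ∧ annOf 0 tr = ν}

/-- Shift an annotation (positions in `ℕ`) by `k`. -/
def shN {Ω : Type} (ν : List (Ω × ℕ)) (k : ℕ) : List (Ω × ℕ) :=
  ν.map (fun p => (p.1, p.2 + k))

/-- Shift a set of annotations elementwise. -/
def shLN {Ω : Type} (L : Set (List (Ω × ℕ))) (k : ℕ) : Set (List (Ω × ℕ)) :=
  (fun ν => shN ν k) '' L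

/-- Concatenation of annotation languages. -/
def catN {Ω : Type} (L1 L2 : Set (List (Ω × ℕ))) : Set (List (Ω × ℕ)) :=
  Set.image2 (· ++ ·) L1 L2

/-- The partial-run matrix `M_d[p, q]`: the set of annotations of partial runs
of `M` over `d` starting in state `p` and ending in state `q`. -/
def Mmat {Q A Ω : Type} (M : AnnA Q A Ω) (d : List A) (p q : Q) :
    Set (List (Ω × ℕ)) :=
  {ν | ∃ tr, M.Run p d tr ∧ finalState p tr = q ∧ annOf 0 tr = ν}

/-- `M` is unambiguous: every annotation of an accepting run over `d` arises
from exactly one accepting run. -/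
def AnnA.Unambiguous {Q A Ω : Type} (M : AnnA Q A Ω) : Prop :=
  ∀ (d : List A) (ν : List (Ω × ℕ)) (tr tr' : List (Option Ω × Q)),
    M.Run M.q0 d tr → finalState M.q0 tr ∈ M.F → annOf 0 tr = ν →
    M.Run M.q0 d tr' → finalState M.q0 tr' ∈ M.F → annOf 0 tr' = ν →
    tr = tr'

/-- `M` is trim: every state is reachable from `q0` and co-reachable to `F`. -/
def AnnA.Trim {Q A Ω : Type} (M : AnnA Q A Ω) : Prop :=
  ∀ q : Q,
    (∃ (d : List A) (tr : List (Option Ω × Q)),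
      M.Run M.q0 d tr ∧ finalState M.q0 tr = q) ∧
    (∃ (d : List A) (tr : List (Option Ω × Q)),
      M.Run q d tr ∧ finalState q tr ∈ M.F)

@[simp]
theorem finalState_cons {Q Ω : Type} (p : Q) (x : Option Ω × Q) (tr : List (Option Ω × Q)) :
    finalState p (x :: tr) = finalState x.2 tr := by
  simp only [finalState, List.map_cons, List.getLastD_cons]

namespace AnnA

variable {Q A Ω : Type} {M : AnnA Q A Ω}

theorem Run.length_eq {p : Q} {d : List A} {tr : List (Option Ω × Q)}
    (h : M.Run p d tr) : tr.length = d.length := by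
  induction h <;> simp [*]

theorem Run.append {p q : Q} {d₁ d₂ : List A} {tr₁ tr₂ : List (Option Ω × Q)}
    (h₁ : M.Run p d₁ tr₁) (hq : finalState p tr₁ = q) (h₂ : M.Run q d₂ tr₂) :
    M.Run p (d₁ ++ d₂) (tr₁ ++ tr₂) := by
  induction h₁ with
  | nil => subst hq; exact h₂
  | plain hΔ _ ih => exact Run.plain hΔ (ih (by simpa using hq))
  | ann hΔ _ ih => exact Run.ann hΔ (ih (by simpa using hq))

end AnnA

section Traces

variable {Q Ω : Type}

theorem finalState_append (p : Q) (tr₁ tr₂ : List (Option Ω × Q)) :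
    finalState p (tr₁ ++ tr₂) = finalState (finalState p tr₁) tr₂ := by
  induction tr₁ generalizing p with
  | nil => rfl
  | cons x tr ih => simpa using ih x.2

theorem annOf_add (i k : ℕ) (tr : List (Option Ω × Q)) :
    annOf (i + k) tr = shN (annOf i tr) k := by
  induction tr generalizing i with
  | nil => rfl
  | cons x tr ih =>
    obtain ⟨_ | o, _⟩ := x <;> simp [annOf, Nat.add_right_comm i k 1, ih (i + 1), shN]

theorem annOf_append (tr₁ tr₂ : List (Option Ω × Q)) :
    annOf 0 (tr₁ ++ tr₂) = annOf 0 tr₁ ++ shN (annOf 0 tr₂) tr₁.length := by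
  suffices ∀ i, annOf i (tr₁ ++ tr₂) = annOf i tr₁ ++ annOf (i + tr₁.length) tr₂ by
    simpa [← annOf_add] using this 0
  induction tr₁ with
  | nil => simp [annOf]
  | cons x tr ih =>
    intro i
    obtain ⟨_ | o, _⟩ := x <;> simp [annOf, ih, Nat.add_right_comm, Nat.add_assoc]

theorem mem_annOf_bounds {i : ℕ} {tr : List (Option Ω × Q)} {x : Ω × ℕ}
    (hx : x ∈ annOf i tr) : i < x.2 ∧ x.2 ≤ i + tr.length := by
  induction tr generalizing i with
  | nil => simp [annOf] at hx
  | cons y tr ih =>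
    obtain ⟨_ | o, _⟩ := y
    · have := ih (i := i + 1) hx
      simp only [List.length_cons]; omega
    · simp only [annOf, List.mem_cons] at hx
      rcases hx with rfl | hx
      · simp
      · have := ih hx
        simp only [List.length_cons]; omega

end Traces

section Matrices

variable {Q A Ω : Type} {M : AnnA Q A Ω}

theorem le_length_of_mem_Mmat {d : List A} {p q : Q} {ν : List (Ω × ℕ)}
    (hν : ν ∈ Mmat M d p q) : ∀ x ∈ ν, x.2 ≤ d.length := by
  obtain ⟨tr, hr, -, rfl⟩ := hν
  intro x hx
  simpa [hr.length_eq] using (mem_annOf_bounds hx).2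

theorem not_le_of_mem_shLN_Mmat {d : List A} {p q : Q} {k : ℕ} {μ : List (Ω × ℕ)}
    (hμ : μ ∈ shLN (Mmat M d p q) k) : ∀ x ∈ μ, ¬x.2 ≤ k := by
  obtain ⟨-, ⟨tr, -, -, rfl⟩, rfl⟩ := hμ
  simp only [shN, List.mem_map]
  rintro _ ⟨x, hx, rfl⟩
  have := (mem_annOf_bounds hx).1
  simp only [not_le]; omega

theorem exists_runs_of_mem_catN {d₁ d₂ : List A} {p q' q : Q} {w : List (Ω × ℕ)}
    (hw : w ∈ catN (Mmat M d₁ p q') (shLN (Mmat M d₂ q' q) d₁.length)) :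
    ∃ tr₁ tr₂, M.Run p d₁ tr₁ ∧ finalState p tr₁ = q' ∧ M.Run q' d₂ tr₂ ∧
      finalState q' tr₂ = q ∧ annOf 0 (tr₁ ++ tr₂) = w := by
  obtain ⟨-, ⟨tr₁, hr₁, hf₁, rfl⟩, -, ⟨-, ⟨tr₂, hr₂, hf₂, rfl⟩, rfl⟩, rfl⟩ := hw
  exact ⟨tr₁, tr₂, hr₁, hf₁, hr₂, hf₂, by rw [annOf_append, hr₁.length_eq]⟩

end Matrices

theorem List.append_inj_of_separated {α : Type*} (P : α → Prop) [DecidablePred P]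
    {a b a' b' : List α} (h : a ++ b = a' ++ b') (ha : ∀ x ∈ a, P x) (hb : ∀ x ∈ b, ¬P x)
    (ha' : ∀ x ∈ a', P x) (hb' : ∀ x ∈ b', ¬P x) : a = a' ∧ b = b' := by
  have split : ∀ {c d : List α}, (∀ x ∈ c, P x) → (∀ x ∈ d, ¬P x) →
      (c ++ d).filter (fun x => decide (P x)) = c ∧ (c ++ d).filter (fun x => decide ¬P x) = d :=
    fun hc hd => by
      rw [List.filter_append, List.filter_append, List.filter_eq_self.2 (by simpa),
        List.filter_eq_nil_iff.2 (by simpa), List.filter_eq_nil_iff.2 (by simpa),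
        List.filter_eq_self.2 (by simpa)]
      simp
  obtain ⟨h₁, h₂⟩ := split ha hb
  obtain ⟨h₁', h₂'⟩ := split ha' hb'
  exact ⟨h₁.symm.trans (h ▸ h₁'), h₂.symm.trans (h ▸ h₂')⟩

theorem AnnA.Unambiguous.trace_eq_of_annOf_eq {Q A Ω : Type} {M : AnnA Q A Ω}
    (hunamb : M.Unambiguous) (htrim : M.Trim) {p q : Q} {d : List A}
    {tr tr' : List (Option Ω × Q)}
    (hr : M.Run p d tr) (hf : finalState p tr = q)
    (hr' : M.Run p d tr') (hf' : finalState p tr' = q)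
    (hann : annOf 0 tr = annOf 0 tr') : tr = tr' := by
  obtain ⟨⟨d₀, tr₀, hr₀, hf₀⟩, -⟩ := htrim p
  obtain ⟨-, ⟨d₃, tr₃, hr₃, hf₃⟩⟩ := htrim q
  have pad : ∀ t, M.Run p d t → finalState p t = q →
      M.Run M.q0 (d₀ ++ (d ++ d₃)) (tr₀ ++ (t ++ tr₃)) ∧
        finalState M.q0 (tr₀ ++ (t ++ tr₃)) ∈ M.F := fun t ht htf =>
    ⟨hr₀.append hf₀ (ht.append htf hr₃), by simpa [finalState_append, hf₀, htf] using hf₃⟩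
  have hlen : tr.length = tr'.length := by rw [hr.length_eq, hr'.length_eq]
  have key := hunamb _ _ _ _ (pad tr hr hf).1 (pad tr hr hf).2 rfl (pad tr' hr' hf').1
    (pad tr' hr' hf').2 (by simp only [annOf_append, hann, hlen])
  exact List.append_cancel_right (List.append_cancel_left key)

/-- For an unambiguous trim AnnA and a rule `X → Y1 Y2` (so
`doc(X) = doc(Y1) · doc(Y2)`), the union over intermediate states `q'` in
`M_X[p,q] = ⋃_{q'} M_{Y1}[p,q'] · sh(M_{Y2}[q',q], |doc(Y1)|)` is a disjoint
union, and each concatenation decomposes uniquely. -/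
theorem slp_rule_union_disjoint {Q A Ω : Type} (M : AnnA Q A Ω)
    (hunamb : M.Unambiguous) (htrim : M.Trim)
    (docY1 docY2 : List A) (p q : Q) :
    (∀ q1 q2 : Q, q1 ≠ q2 →
      Disjoint (catN (Mmat M docY1 p q1) (shLN (Mmat M docY2 q1 q) docY1.length))
               (catN (Mmat M docY1 p q2) (shLN (Mmat M docY2 q2 q) docY1.length))) ∧
    (∀ q' : Q, ∀ w ∈ catN (Mmat M docY1 p q') (shLN (Mmat M docY2 q' q) docY1.length),
      ∃! pr : List (Ω × ℕ) × List (Ω × ℕ),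
        pr.1 ∈ Mmat M docY1 p q' ∧ pr.2 ∈ shLN (Mmat M docY2 q' q) docY1.length ∧
        w = pr.1 ++ pr.2) := by
  constructor
  · intro q₁ q₂ hne
    refine Set.disjoint_left.2 fun w hw₁ hw₂ => hne ?_
    obtain ⟨tr₁, tr₂, hr₁, hf₁, hr₂, hf₂, rfl⟩ := exists_runs_of_mem_catN hw₁
    obtain ⟨tr₁', tr₂', hr₁', hf₁', hr₂', hf₂', hann⟩ := exists_runs_of_mem_catN hw₂
    have htr : tr₁ ++ tr₂ = tr₁' ++ tr₂' :=
      hunamb.trace_eq_of_annOf_eq htrim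
        (hr₁.append hf₁ hr₂) (by rw [finalState_append, hf₁, hf₂])
        (hr₁'.append hf₁' hr₂') (by rw [finalState_append, hf₁', hf₂']) hann.symm
    have htr₁ : tr₁ = tr₁' := (List.append_inj htr (by rw [hr₁.length_eq, hr₁'.length_eq])).1
    rw [← hf₁, ← hf₁', htr₁]
  · rintro q' _ ⟨a, ha, b, hb, rfl⟩
    refine ⟨(a, b), ⟨ha, hb, rfl⟩, ?_⟩
    rintro ⟨a', b'⟩ ⟨ha', hb', h⟩
    obtain ⟨rfl, rfl⟩ := List.append_inj_of_separated (fun x => x.2 ≤ docY1.length) h.symm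
      (le_length_of_mem_Mmat ha') (not_le_of_mem_shLN_Mmat hb')
      (le_length_of_mem_Mmat ha) (not_le_of_mem_shLN_Mmat hb)
    rfl
end
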